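/- Let (Ω, F, P) be a probability space, V : Ω → ℝ^k a measurable random vector, f : ℝ^k → ℝ a measurable function, and W : Ω → ℝ a random variable independent of V, Gaussian with mean m and variance s² > 0. Then, P-almost surely, |E[σ(f(V) + W) | σ(V)] − σ((f(V) + m)/√(1 + (π/8)s²))| ≤ 2·‖δ‖_∞. -/

import Mathlib

open MeasureTheory ProbabilityTheory Real
open scoped NNReal

/-- The standard normal CDF `Φ(t) = (2π)^{-1/2} ∫_{-∞}^t e^{-s²/2} ds`. -/
noncomputable def stdNormalCDF (t : ℝ) : ℝ :=
  ∫ s in Set.Iic t, Real.exp (-s ^ 2 / 2) / Real.sqrt (2 * Real.pi)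

/-- The logistic (sigmoid) function `σ(t) = 1/(1 + e^{-t})`. -/
noncomputable def logisticFn (t : ℝ) : ℝ := 1 / (1 + Real.exp (-t))

/-- `δ(t) = Φ(t) − σ(√(8/π)·t)`. -/
noncomputable def deltaFn (t : ℝ) : ℝ :=
  stdNormalCDF t - logisticFn (Real.sqrt (8 / Real.pi) * t)

/-!
With `c = √(π/8)` one has `σ(u) = Φ(cu) − δ(cu)`. Conditioning on `V` freezes `a = f(V)`, and by
independence the conditional law of `W` stays `N(m, s²)`. For a standard normal `Z` independent of
`W`, `E Φ(α + cW) = P(Z − cW ≤ α) = Φ((α + cm)/√(1 + c²s²))` since `Z − cW` is again Gaussian,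
so the `Φ`-parts of `E σ(a + W)` and of the rescaled logistic coincide exactly; what remains are
two `δ`-terms, each bounded by `‖δ‖_∞`.
-/

open Set

lemma stdNormalCDF_eq_cdf : stdNormalCDF = cdf (gaussianReal 0 1) := by
  ext t
  rw [cdf_eq_real, measureReal_def, gaussianReal_apply_eq_integral _ one_ne_zero,
    ENNReal.toReal_ofReal (setIntegral_nonneg measurableSet_Iic
      fun x _ => gaussianPDFReal_nonneg 0 1 x), stdNormalCDF]
  congr with x
  simp [gaussianPDFReal, div_eq_inv_mul]

lemma cdf_gaussianReal (μ : ℝ) {v : ℝ≥0} (hv : v ≠ 0) (x : ℝ) :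
    cdf (gaussianReal μ v) x = stdNormalCDF ((x - μ) / √v) := by
  have hsqrt : 0 < √(v : ℝ) := by positivity
  have hstd : (gaussianReal μ v).map (fun y => (y - μ) / √v) = gaussianReal 0 1 := by
    rw [show (fun y => (y - μ) / √v) = (· / √v) ∘ (· - μ) from rfl,
      ← Measure.map_map (by fun_prop) (by fun_prop), gaussianReal_map_sub_const,
      gaussianReal_map_div_const]
    congr 1
    · simp
    · ext; simp [Real.sq_sqrt, hv]
  rw [stdNormalCDF_eq_cdf, cdf_eq_real, cdf_eq_real, ← hstd,
    map_measureReal_apply (by fun_prop) measurableSet_Iic]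
  congr 1
  ext y
  simp [div_le_div_iff_of_pos_right hsqrt]

lemma conv_apply_Iic (μ ν : Measure ℝ) [SFinite ν] (α : ℝ) :
    (μ ∗ ν) (Iic α) = ∫⁻ x, ν (Iic (α - x)) ∂μ := by
  rw [← lintegral_indicator_one measurableSet_Iic,
    Measure.lintegral_conv (measurable_one.indicator measurableSet_Iic)]
  congr with x
  rw [← lintegral_indicator_one measurableSet_Iic]
  congr with y
  simp [indicator_apply, le_sub_iff_add_le']

lemma integral_cdf_sub_eq_cdf_conv (μ ν : Measure ℝ) [IsProbabilityMeasure μ]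
    [IsProbabilityMeasure ν] (α : ℝ) : ∫ x, cdf ν (α - x) ∂μ = cdf (μ ∗ ν) α := by
  have hanti : Antitone fun x => ν (Iic (α - x)) :=
    fun x y hxy => measure_mono (Iic_subset_Iic.mpr (by linarith))
  simp_rw [cdf_eq_real, measureReal_def]
  rw [integral_toReal hanti.measurable.aemeasurable (ae_of_all _ fun x => measure_lt_top _ _),
    conv_apply_Iic]

lemma integral_stdNormalCDF_affine_gaussianReal (α c m : ℝ) (v : ℝ≥0) :
    ∫ w, stdNormalCDF (α + c * w) ∂gaussianReal m v =
      stdNormalCDF ((α + c * m) / √(1 + c ^ 2 * v)) := by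
  calc ∫ w, stdNormalCDF (α + c * w) ∂gaussianReal m v
      = ∫ x, cdf (gaussianReal 0 1) (α - x) ∂(gaussianReal m v).map ((-c) * ·) := by
        rw [integral_map (f := fun x => cdf (gaussianReal 0 1) (α - x)) (by fun_prop)
          ((cdf _).mono.measurable.comp (by fun_prop)).aestronglyMeasurable, stdNormalCDF_eq_cdf]
        simp_rw [neg_mul, sub_neg_eq_add]
    _ = stdNormalCDF ((α + c * m) / √(1 + c ^ 2 * v)) := by
        rw [gaussianReal_map_const_mul, integral_cdf_sub_eq_cdf_conv,
          gaussianReal_conv_gaussianReal, cdf_gaussianReal _ (by positivity)]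
        congr 2
        · ring
        · push_cast; rw [neg_sq, add_comm]

lemma logisticFn_eq_sigmoid : logisticFn = Real.sigmoid := by
  ext t
  rw [logisticFn, Real.sigmoid_def, one_div]

@[fun_prop]
lemma measurable_stdNormalCDF : Measurable stdNormalCDF :=
  stdNormalCDF_eq_cdf ▸ (cdf _).mono.measurable

@[fun_prop]
lemma measurable_logisticFn : Measurable logisticFn :=
  logisticFn_eq_sigmoid ▸ Real.sigmoid_monotone.measurable

lemma abs_stdNormalCDF_le_one (t : ℝ) : |stdNormalCDF t| ≤ 1 := by
  rw [stdNormalCDF_eq_cdf, abs_of_nonneg (cdf_nonneg _ _)]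
  exact cdf_le_one _ _

lemma abs_logisticFn_le_one (t : ℝ) : |logisticFn t| ≤ 1 := by
  rw [logisticFn_eq_sigmoid, abs_of_nonneg (Real.sigmoid_nonneg _)]
  exact Real.sigmoid_le_one _

@[fun_prop]
lemma measurable_deltaFn : Measurable deltaFn :=
  measurable_stdNormalCDF.sub (measurable_logisticFn.comp (by fun_prop))

lemma abs_deltaFn_le_one (t : ℝ) : |deltaFn t| ≤ 1 := by
  rw [deltaFn, stdNormalCDF_eq_cdf, logisticFn_eq_sigmoid]
  exact abs_sub_le_of_nonneg_of_le (cdf_nonneg _ _) (cdf_le_one _ _)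
    (Real.sigmoid_nonneg _) (Real.sigmoid_le_one _)

lemma abs_deltaFn_le_iSup (t : ℝ) : |deltaFn t| ≤ ⨆ u, |deltaFn u| :=
  le_ciSup (f := fun u => |deltaFn u|) ⟨1, by rintro _ ⟨u, rfl⟩; exact abs_deltaFn_le_one u⟩ t

lemma abs_integral_deltaFn_le_iSup {α : Type*} [MeasurableSpace α] (μ : Measure α)
    [IsProbabilityMeasure μ] (g : α → ℝ) : |∫ x, deltaFn (g x) ∂μ| ≤ ⨆ u, |deltaFn u| := by
  simpa using norm_integral_le_of_norm_le_const (μ := μ) (ae_of_all _ fun x =>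
    (Real.norm_eq_abs _).trans_le (abs_deltaFn_le_iSup (g x)))

lemma logisticFn_eq_stdNormalCDF_sub_deltaFn (u : ℝ) :
    logisticFn u = stdNormalCDF (√(π / 8) * u) - deltaFn (√(π / 8) * u) := by
  have hsqrt : √(8 / π) * √(π / 8) = 1 := by
    rw [← Real.sqrt_mul (by positivity), div_mul_div_comm, mul_comm 8 π,
      div_self (by positivity), Real.sqrt_one]
  rw [deltaFn, ← mul_assoc, hsqrt, one_mul, sub_sub_cancel]

lemma abs_integral_logisticFn_gaussianReal_sub_le (a m : ℝ) (v : ℝ≥0) :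
    |∫ w, logisticFn (a + w) ∂gaussianReal m v - logisticFn ((a + m) / √(1 + π / 8 * v))| ≤
      2 * ⨆ t, |deltaFn t| := by
  set c := √(π / 8)
  have hc2 : c ^ 2 = π / 8 := Real.sq_sqrt (by positivity)
  have hΦ : Integrable (fun w => stdNormalCDF (c * (a + w))) (gaussianReal m v) :=
    .of_bound (by fun_prop : Measurable _).aestronglyMeasurable 1
      (ae_of_all _ fun _ => abs_stdNormalCDF_le_one _)
  have hδ : Integrable (fun w => deltaFn (c * (a + w))) (gaussianReal m v) :=
    .of_bound (by fun_prop : Measurable _).aestronglyMeasurable 1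
      (ae_of_all _ fun _ => abs_deltaFn_le_one _)
  have hmean : ∫ w, logisticFn (a + w) ∂gaussianReal m v =
      stdNormalCDF ((c * a + c * m) / √(1 + c ^ 2 * v)) -
        ∫ w, deltaFn (c * (a + w)) ∂gaussianReal m v := by
    simp_rw [logisticFn_eq_stdNormalCDF_sub_deltaFn]
    rw [integral_sub hΦ hδ]
    simp_rw [mul_add]
    rw [integral_stdNormalCDF_affine_gaussianReal]
  have htarget : logisticFn ((a + m) / √(1 + π / 8 * v)) =
      stdNormalCDF ((c * a + c * m) / √(1 + c ^ 2 * v)) -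
        deltaFn (c * ((a + m) / √(1 + π / 8 * v))) := by
    rw [logisticFn_eq_stdNormalCDF_sub_deltaFn, hc2, mul_div_assoc', mul_add]
  rw [hmean, htarget, sub_sub_sub_cancel_left]
  calc _ ≤ |deltaFn (c * ((a + m) / √(1 + π / 8 * v)))| +
        |∫ w, deltaFn (c * (a + w)) ∂gaussianReal m v| := abs_sub _ _
    _ ≤ 2 * ⨆ t, |deltaFn t| := by
      linarith [abs_deltaFn_le_iSup (c * ((a + m) / √(1 + π / 8 * v))),
        abs_integral_deltaFn_le_iSup (gaussianReal m v) fun w => c * (a + w)]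

section IndependentNoise

variable {Ω β γ : Type*} {mΩ : MeasurableSpace Ω} [MeasurableSpace β] [MeasurableSpace γ]
  [StandardBorelSpace γ] [Nonempty γ] {P : Measure Ω} [IsFiniteMeasure P] {X : Ω → β} {Y : Ω → γ}

lemma condDistrib_ae_eq_const_of_indepFun (hX : AEMeasurable X P) (hY : AEMeasurable Y P)
    (hXY : IndepFun X Y P) : condDistrib Y X P =ᵐ[P.map X] Kernel.const β (P.map Y) :=
  condDistrib_ae_eq_of_measure_eq_compProd X hY <| by
    rw [Measure.compProd_const, ← (indepFun_iff_map_prod_eq_prod_map_map hX hY).mp hXY]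

lemma condExp_prod_ae_eq_integral_of_indepFun {F : Type*} [NormedAddCommGroup F]
    [NormedSpace ℝ F] [CompleteSpace F] {g : β × γ → F} (hX : Measurable X)
    (hY : AEMeasurable Y P) (hXY : IndepFun X Y P) (hg : StronglyMeasurable g)
    (hg_int : Integrable (fun ω => g (X ω, Y ω)) P) :
    P[fun ω => g (X ω, Y ω) | MeasurableSpace.comap X inferInstance] =ᵐ[P]
      fun ω => ∫ y, g (X ω, y) ∂P.map Y := by
  filter_upwards [condExp_prod_ae_eq_integral_condDistrib hX hY hg hg_int,
    ae_of_ae_map hX.aemeasurable (condDistrib_ae_eq_const_of_indepFun hX.aemeasurable hY hXY)]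
    with ω hω hκ
  rw [hω, hκ, Kernel.const_apply]

end IndependentNoise

theorem logistic_condexp_bound_general {Ω : Type*} [MeasurableSpace Ω]
    (P : Measure Ω) [IsProbabilityMeasure P] (k : ℕ)
    (V : Ω → (Fin k → ℝ)) (hV : Measurable V)
    (f : (Fin k → ℝ) → ℝ) (hf : Measurable f)
    (W : Ω → ℝ) (hW : Measurable W)
    (hindep : IndepFun V W P)
    (m : ℝ) (s2 : ℝ≥0)
    (hWdist : P.map W = gaussianReal m s2) :
    ∀ᵐ ω ∂P,
      |(P[fun ω => logisticFn (f (V ω) + W ω) |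
            MeasurableSpace.comap V inferInstance]) ω -
          logisticFn ((f (V ω) + m) / Real.sqrt (1 + (Real.pi / 8) * (s2 : ℝ)))| ≤
        2 * ⨆ t : ℝ, |deltaFn t| := by
  have hg : Measurable fun p : (Fin k → ℝ) × ℝ => logisticFn (f p.1 + p.2) := by fun_prop
  have hg_int : Integrable (fun ω => logisticFn (f (V ω) + W ω)) P :=
    .of_bound (hg.comp (hV.prodMk hW)).aestronglyMeasurable 1
      (ae_of_all _ fun _ => abs_logisticFn_le_one _)
  filter_upwards [condExp_prod_ae_eq_integral_of_indepFun (g := fun p => logisticFn (f p.1 + p.2))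
    hV hW.aemeasurable hindep hg.stronglyMeasurable hg_int] with ω hω
  rw [hω, hWdist]
  exact abs_integral_logisticFn_gaussianReal_sub_le _ _ _

/-- Conditional-expectation form of Theorem 2: if `W ~ N(m, s²)` with `s² > 0` is
independent of the random vector `V`, then a.s.
`|E[σ(f(V) + W) | σ(V)] − σ((f(V) + m)/√(1 + (π/8)s²))| ≤ 2‖δ‖_∞`. -/
theorem logistic_condexp_bound {Ω : Type*} [MeasurableSpace Ω]
    (P : Measure Ω) [IsProbabilityMeasure P] (k : ℕ)
    (V : Ω → (Fin k → ℝ)) (hV : Measurable V)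
    (f : (Fin k → ℝ) → ℝ) (hf : Measurable f)
    (W : Ω → ℝ) (hW : Measurable W)
    (hindep : IndepFun V W P)
    (m : ℝ) (s2 : ℝ≥0) (hs2 : 0 < s2)
    (hWdist : P.map W = gaussianReal m s2) :
    ∀ᵐ ω ∂P,
      |(P[fun ω => logisticFn (f (V ω) + W ω) |
            MeasurableSpace.comap V inferInstance]) ω -
          logisticFn ((f (V ω) + m) / Real.sqrt (1 + (Real.pi / 8) * (s2 : ℝ)))| ≤
        2 * ⨆ t : ℝ, |deltaFn t| :=
  logistic_condexp_bound_general P k V hV f hf W hW hindep m s2 hWdist
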